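/- Residual bound for the least-squares system: Under the hypotheses of the gradient estimation lemma with μ = 1, the vector q of difference quotients satisfies ‖A∇f(a) − q‖² ≤ (ϑ/2)² · h_max² · ∑_{k=1}^m ‖ν_k‖₁², where the k-th entry of A∇f(a) − q is ⟨ν_k, ∇f(a)⟩ − (f(a + h_k ν_k) − f(a))/h_k. -/

import Mathlib

/-!
Each residual is the first-order Taylor remainder of `f` along the segment from `a` to
`a + h_k ν_k`, divided by `h_k`. A `ϑ`-Lipschitz gradient bounds that remainder by
`(ϑ/2) h_k²`, so the residual is at most `(ϑ/2) h_k ≤ (ϑ/2) h_max ‖ν_k‖₁`, since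
`‖ν_k‖₂ = 1 ≤ ‖ν_k‖₁`.
-/

open Set
open scoped RealInnerProductSpace

theorem abs_sub_sub_deriv_le_of_abs_deriv_sub_le {g g' : ℝ → ℝ} {C : ℝ}
    (hg : ContinuousOn g (Icc 0 1))
    (hderiv : ∀ t ∈ Ico (0 : ℝ) 1, HasDerivWithinAt g (g' t) (Ici t) t)
    (hlip : ∀ t ∈ Ico (0 : ℝ) 1, |g' t - g' 0| ≤ C * t) :
    |g 1 - g 0 - g' 0| ≤ C / 2 := by
  -- fence the remainder `g t - g 0 - t g' 0` by `C t² / 2`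
  have hfence := image_norm_le_of_norm_deriv_right_le_deriv_boundary
    (f := fun t => g t - g 0 - t * g' 0) (B := fun t => C / 2 * t ^ 2) (B' := fun t => C * t)
    ((hg.sub continuousOn_const).sub (continuousOn_id.mul continuousOn_const))
    (fun t ht => ((hderiv t ht).sub_const (g 0)).sub (hasDerivAt_mul_const (g' 0)).hasDerivWithinAt)
    (by simp)
    (fun t => ((hasDerivAt_pow 2 t).const_mul (C / 2)).congr_deriv (by ring))
    hlip (right_mem_Icc.mpr zero_le_one)
  simpa using hfence

theorem abs_sub_sub_inner_gradient_le {E : Type*} [NormedAddCommGroup E]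
    [InnerProductSpace ℝ E] [CompleteSpace E] {f : E → ℝ} {s : Set E} {x y : E} {ϑ : ℝ}
    (hs : Convex ℝ s) (hcont : ContinuousOn f s) (hdiff : DifferentiableOn ℝ f (interior s))
    (hlip : ∀ z ∈ s, ∀ w ∈ s, ‖gradient f z - gradient f w‖ ≤ ϑ * ‖z - w‖)
    (hx : x ∈ interior s) (hy : y ∈ s) :
    |f y - f x - ⟪gradient f x, y - x⟫| ≤ ϑ / 2 * ‖y - x‖ ^ 2 := by
  set γ : ℝ → E := fun t => x + t • (y - x)
  have hγ_mem : ∀ t ∈ Icc (0 : ℝ) 1, γ t ∈ s := fun t ht =>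
    hs.add_smul_sub_mem (interior_subset hx) hy ht
  have hγ_interior : ∀ t ∈ Ico (0 : ℝ) 1, γ t ∈ interior s := by
    intro t ht
    convert hs.add_smul_sub_mem_interior hy hx (t := 1 - t) ⟨by linarith [ht.2], by linarith [ht.1]⟩
      using 1
    simp only [γ, sub_smul, one_smul, smul_sub]
    abel
  have hγ_deriv : ∀ t, HasDerivAt γ (y - x) t := fun t => by
    simpa only [one_smul] using ((hasDerivAt_id' t).smul_const (y - x)).const_add x
  have hderiv : ∀ t ∈ Ico (0 : ℝ) 1,
      HasDerivAt (f ∘ γ) ⟪gradient f (γ t), y - x⟫ t := fun t ht =>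
    ((hdiff.differentiableAt (isOpen_interior.mem_nhds (hγ_interior t ht))).hasGradientAt
      |>.hasFDerivAt).comp_hasDerivAt t (hγ_deriv t)
  have hbound : ∀ t ∈ Ico (0 : ℝ) 1,
      |⟪gradient f (γ t), y - x⟫ - ⟪gradient f (γ 0), y - x⟫| ≤ ϑ * ‖y - x‖ ^ 2 * t := by
    intro t ht
    have hγ0 : γ 0 = x := by simp [γ]
    rw [← inner_sub_left, hγ0]
    calc |⟪gradient f (γ t) - gradient f x, y - x⟫|
        ≤ ‖gradient f (γ t) - gradient f x‖ * ‖y - x‖ := abs_real_inner_le_norm _ _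
      _ ≤ ϑ * ‖γ t - x‖ * ‖y - x‖ := by
        gcongr
        exact hlip _ (hγ_mem t (Ico_subset_Icc_self ht)) _ (interior_subset hx)
      _ = ϑ * ‖y - x‖ ^ 2 * t := by
        simp only [γ, add_sub_cancel_left, norm_smul, Real.norm_of_nonneg ht.1]
        ring
  have hremainder := abs_sub_sub_deriv_le_of_abs_deriv_sub_le
    (hcont.comp (by fun_prop) hγ_mem) (fun t ht => (hderiv t ht).hasDerivWithinAt) hbound
  simpa [γ, mul_div_right_comm] using hremainder

theorem EuclideanSpace.norm_le_sum_abs {ι : Type*} [Fintype ι] (v : EuclideanSpace ℝ ι) :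
    ‖v‖ ≤ ∑ i, |v i| := by
  rw [EuclideanSpace.norm_eq]
  refine Real.sqrt_le_iff.mpr ⟨Finset.sum_nonneg fun i _ => abs_nonneg _, ?_⟩
  simpa using Finset.sum_sq_le_sq_sum_of_nonneg (s := Finset.univ) (f := fun i => |v i|)
    (fun i _ => abs_nonneg _)

theorem abs_inner_gradient_sub_slope_le {E : Type*} [NormedAddCommGroup E]
    [InnerProductSpace ℝ E] [CompleteSpace E] {f : E → ℝ} {s : Set E} {x v : E} {h ϑ : ℝ}
    (hs : Convex ℝ s) (hcont : ContinuousOn f s) (hdiff : DifferentiableOn ℝ f (interior s))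
    (hlip : ∀ z ∈ s, ∀ w ∈ s, ‖gradient f z - gradient f w‖ ≤ ϑ * ‖z - w‖)
    (hx : x ∈ interior s) (hh : 0 < h) (hmem : x + h • v ∈ s) :
    |⟪v, gradient f x⟫ - (f (x + h • v) - f x) / h| ≤ ϑ / 2 * h * ‖v‖ ^ 2 := by
  have htaylor := abs_sub_sub_inner_gradient_le hs hcont hdiff hlip hx hmem
  rw [add_sub_cancel_left, real_inner_smul_right, norm_smul, Real.norm_of_nonneg hh.le] at htaylor
  have hrewrite : ⟪v, gradient f x⟫ - (f (x + h • v) - f x) / h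
      = -((f (x + h • v) - f x - h * ⟪gradient f x, v⟫) / h) := by
    field_simp
    rw [real_inner_comm]
    ring
  rw [hrewrite, abs_neg, abs_div, abs_of_pos hh, div_le_iff₀ hh]
  linarith

theorem dnnr_least_squares_residual_bound_general
    (d m : ℕ) (f : EuclideanSpace ℝ (Fin d) → ℝ)
    (B : Set (EuclideanSpace ℝ (Fin d)))
    (a : EuclideanSpace ℝ (Fin d)) (ν : Fin m → EuclideanSpace ℝ (Fin d))
    (h : Fin m → ℝ) (ϑ hmax : ℝ)
    (hB : B ∈ nhds a) (hBconv : Convex ℝ B)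
    (hsmooth : ContDiffOn ℝ 1 f B)
    (hlip : ∀ x ∈ B, ∀ y ∈ B, ‖gradient f x - gradient f y‖ ≤ ϑ * ‖x - y‖)
    (hν : ∀ k, ‖ν k‖ = 1) (hh : ∀ k, 0 < h k)
    (hmem : ∀ k, a + h k • ν k ∈ B)
    (hmaxdef : hmax = ⨆ k, h k) :
    ∑ k, (⟪ν k, gradient f a⟫ - (f (a + h k • ν k) - f a) / h k) ^ 2
      ≤ (ϑ / 2) ^ 2 * hmax ^ 2 * ∑ k, (∑ i, |ν k i|) ^ 2 := by
  have hdiff : DifferentiableOn ℝ f (interior B) :=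
    (hsmooth.mono interior_subset).differentiableOn one_ne_zero
  rw [Finset.mul_sum]
  refine Finset.sum_le_sum fun k _ => ?_
  have hresidual := abs_inner_gradient_sub_slope_le hBconv hsmooth.continuousOn hdiff hlip
    (mem_interior_iff_mem_nhds.mpr hB) (hh k) (hmem k)
  rw [hν k, one_pow, mul_one] at hresidual
  have hk_le : h k ≤ hmax := hmaxdef ▸ le_ciSup (Set.finite_range h).bddAbove k
  have hk_le_l1 : h k ≤ hmax * ∑ i, |ν k i| := calc
    h k ≤ hmax * ‖ν k‖ := by rw [hν k, mul_one]; exact hk_le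
    _ ≤ hmax * ∑ i, |ν k i| :=
      mul_le_mul_of_nonneg_left (EuclideanSpace.norm_le_sum_abs _) ((hh k).le.trans hk_le)
  calc _ ≤ (ϑ / 2 * h k) ^ 2 := sq_le_sq.mpr (hresidual.trans (le_abs_self _))
    _ = (ϑ / 2) ^ 2 * h k ^ 2 := by ring
    _ ≤ (ϑ / 2) ^ 2 * (hmax * ∑ i, |ν k i|) ^ 2 := by gcongr; exact (hh k).le
    _ = (ϑ / 2) ^ 2 * hmax ^ 2 * (∑ i, |ν k i|) ^ 2 := by ring

/-- Residual bound for the least-squares system (μ = 1):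
`∑_k (⟪ν_k, ∇f(a)⟫ - (f(a + h_k ν_k) - f a)/h_k)² ≤ (ϑ/2)² h_max² ∑_k ‖ν_k‖₁²`. -/
theorem dnnr_least_squares_residual_bound
    (d m : ℕ) (f : EuclideanSpace ℝ (Fin d) → ℝ)
    (B : Set (EuclideanSpace ℝ (Fin d)))
    (a : EuclideanSpace ℝ (Fin d)) (ν : Fin m → EuclideanSpace ℝ (Fin d))
    (h : Fin m → ℝ) (ϑ hmax : ℝ)
    (hB : B ∈ nhds a) (hBconv : Convex ℝ B)
    (hsmooth : ContDiffOn ℝ 1 f B)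
    (hϑ : 0 ≤ ϑ)
    (hlip : ∀ x ∈ B, ∀ y ∈ B, ‖gradient f x - gradient f y‖ ≤ ϑ * ‖x - y‖)
    (hν : ∀ k, ‖ν k‖ = 1) (hh : ∀ k, 0 < h k)
    (hmem : ∀ k, a + h k • ν k ∈ B)
    (hmaxdef : hmax = ⨆ k, h k) :
    ∑ k, (⟪ν k, gradient f a⟫ - (f (a + h k • ν k) - f a) / h k) ^ 2
      ≤ (ϑ / 2) ^ 2 * hmax ^ 2 * ∑ k, (∑ i, |ν k i|) ^ 2 :=
  dnnr_least_squares_residual_bound_general d m f B a ν h ϑ hmax hB hBconv hsmooth hlip hν hh hmem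
    hmaxdef
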